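/- Let (T(t)) and (S(t)) be C₀-semigroups on a Banach space E, with (A,dom(A)) the generator of (T(t)), 0 ∈ ρ(A), and extrapolation data (E₋₁,ι,T₋₁,A₋₁). Let (𝒰(t)) and (𝒱(t)) be the semigroups on 𝓛(E) left implemented by (T(t)) and (S(t)) respectively, and let (𝒢,dom(𝒢)) be the generator of (𝒰(t)). Suppose 𝒦 : 𝓛(E) → 𝓛(E,E₋₁) belongs to the admissibility class 𝒮^{DS,τ_sot}_{t₀}(𝒰) for some t₀ > 0 and that 𝒞 := (𝒢₋₁+𝒦)|_{𝓛(E)} (with maximal domain {C ∈ 𝓛(E) : 𝒢₋₁C + 𝒦C ∈ 𝓛(E)}) is the generator of (𝒱(t)). Then 𝒦 is a right multiplication-type operator: 𝒦(C∘D) = 𝒦(C)∘D for all C, D ∈ 𝓛(E). -/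

import Mathlib

open Set Filter Topology MeasureTheory

variable {E E₁ : Type*} [NormedAddCommGroup E] [NormedSpace ℝ E]
  [NormedAddCommGroup E₁] [NormedSpace ℝ E₁]

/-- A `C₀`-semigroup on a Banach space `E`. -/
structure IsC0Semigroup (T : ℝ → E →L[ℝ] E) : Prop where
  map_zero : T 0 = 1
  map_add : ∀ s t : ℝ, 0 ≤ s → 0 ≤ t → T (s + t) = (T s).comp (T t)
  strongCont : ∀ x : E, ContinuousOn (fun t => T t x) (Ici (0:ℝ))

/-- The generator relation of a `C₀`-semigroup: `y = Ax`. -/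
def C0GenRel (T : ℝ → E →L[ℝ] E) (x y : E) : Prop :=
  Tendsto (fun t : ℝ => t⁻¹ • (T t x - x)) (nhdsWithin 0 (Ioi 0)) (nhds y)

/-- Extrapolation data `(E₋₁, ι, T₋₁, A₋₁)` for a `C₀`-semigroup `T` with `0 ∈ ρ(A)`:
`ι : E → E₋₁` is a continuous dense injection, `T₋₁` a `C₀`-semigroup on `E₋₁` extending `T`
via `ι`, whose generator `A₋₁` has domain `ι(E)`, extends `A`, and `Am = A₋₁ ∘ ι : E → E₋₁`
is an isomorphism. -/
structure ExtrapolationData (T : ℝ → E →L[ℝ] E) (T₁ : ℝ → E₁ →L[ℝ] E₁)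
    (ι : E →L[ℝ] E₁) (Am : E ≃L[ℝ] E₁) : Prop where
  c0T : IsC0Semigroup T
  c0T₁ : IsC0Semigroup T₁
  inj : Function.Injective ι
  dense : DenseRange ι
  intertwine : ∀ t : ℝ, 0 ≤ t → ∀ x : E, T₁ t (ι x) = ι (T t x)
  gen₁ : ∀ x : E, C0GenRel T₁ (ι x) (Am x)
  gen₁_dom : ∀ z y : E₁, C0GenRel T₁ z y → z ∈ Set.range ι
  gen_extends : ∀ x y : E, C0GenRel T x y → (Am x : E₁) = ι y
  zero_res : ∃ R : E →L[ℝ] E, (∀ y : E, C0GenRel T (R y) y) ∧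
    ∀ x y : E, C0GenRel T x y → x = R y

/-- The Desch–Schappacher admissibility class `𝒮^{DS}_{t₀}(T)` for a `C₀`-semigroup:
for every strongly continuous `𝓛(E)`-valued `F` the Volterra integrals take values in `ι(E)`,
give a strongly continuous `𝓛(E)`-valued function `V_B F`, and `‖V_B‖ ≤ q < 1`. -/
def MemSDS (T₁ : ℝ → E₁ →L[ℝ] E₁) (ι : E →L[ℝ] E₁) (B : E →L[ℝ] E₁) (t₀ : ℝ) : Prop :=
  ∃ q : ℝ, 0 ≤ q ∧ q < 1 ∧
    ∀ F : ℝ → E →L[ℝ] E, (∀ x : E, ContinuousOn (fun r => F r x) (Icc (0:ℝ) t₀)) →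
      ∃ G : ℝ → E →L[ℝ] E,
        (∀ t ∈ Icc (0:ℝ) t₀, ∀ x : E,
          ι (G t x) = ∫ r in (0:ℝ)..t, T₁ (t - r) (B (F r x))) ∧
        (∀ x : E, ContinuousOn (fun t => G t x) (Icc (0:ℝ) t₀)) ∧
        ∀ c : ℝ, (∀ s ∈ Icc (0:ℝ) t₀, ‖F s‖ ≤ c) → ∀ t ∈ Icc (0:ℝ) t₀, ‖G t‖ ≤ q * c

/-- The semigroup on `𝓛(E)` left implemented by `T`: `𝒰(t)C := T(t) ∘ C`. -/
noncomputable def implemented (T : ℝ → E →L[ℝ] E) (t : ℝ) :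
    (E →L[ℝ] E) →L[ℝ] (E →L[ℝ] E) :=
  ContinuousLinearMap.compL ℝ E E E (T t)

/-- The extrapolated implemented semigroup on `𝓛(E,E₋₁)`: `𝒰₋₁(t)S := T₋₁(t) ∘ S`. -/
noncomputable def implementedExt (T₁ : ℝ → E₁ →L[ℝ] E₁) (t : ℝ) :
    (E →L[ℝ] E₁) →L[ℝ] (E →L[ℝ] E₁) :=
  ContinuousLinearMap.compL ℝ E E₁ E₁ (T₁ t)

/-- Membership in the space `𝔛_{t₀}` of strongly `τ_sot`-continuous, norm-bounded,
bi-equicontinuous functions `F : [0,t₀] → 𝓛(𝓛(E))`. -/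
def MemXsot (t₀ : ℝ) (F : ℝ → (E →L[ℝ] E) →L[ℝ] (E →L[ℝ] E)) : Prop :=
  (∀ (C : E →L[ℝ] E) (x : E), ContinuousOn (fun t => (F t C) x) (Icc (0:ℝ) t₀)) ∧
  (∃ M : ℝ, ∀ t ∈ Icc (0:ℝ) t₀, ‖F t‖ ≤ M) ∧
  ∀ u : ℕ → E →L[ℝ] E, (∃ c : ℝ, ∀ n, ‖u n‖ ≤ c) →
    (∀ x : E, Tendsto (fun n => u n x) atTop (nhds (0:E))) →
    ∀ x : E, ∀ ε > (0:ℝ), ∃ N : ℕ, ∀ n ≥ N, ∀ t ∈ Icc (0:ℝ) t₀, ‖(F t (u n)) x‖ < ε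

/-- The Desch–Schappacher admissibility class `𝒮^{DS,τ_sot}_{t₀}(𝒰)` for the implemented
semigroup: `𝒦 : 𝓛(E) → 𝓛(E,E₋₁)` is `τ_sot`-to-`τ_sot` continuous, and the Volterra operator
`(V_𝒦 F)(t)C = ∫₀ᵗ 𝒰₋₁(t-r) 𝒦(F(r)C) dr` takes values in `𝓛(E)`, maps `𝔛_{t₀}` into itself
and has `‖V_𝒦‖ ≤ q < 1`. -/
def MemSDSsot (T₁ : ℝ → E₁ →L[ℝ] E₁) (ι : E →L[ℝ] E₁)
    (K : (E →L[ℝ] E) →L[ℝ] (E →L[ℝ] E₁)) (t₀ : ℝ) : Prop :=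
  (∀ x : E, ∃ (v : Finset E) (c : ℝ), 0 ≤ c ∧
      ∀ S : E →L[ℝ] E, ‖(K S) x‖ ≤ c * ∑ y ∈ v, ‖S y‖) ∧
  ∃ q : ℝ, 0 ≤ q ∧ q < 1 ∧
    ∀ F : ℝ → (E →L[ℝ] E) →L[ℝ] (E →L[ℝ] E), MemXsot t₀ F →
      ∃ G : ℝ → (E →L[ℝ] E) →L[ℝ] (E →L[ℝ] E), MemXsot t₀ G ∧
        (∀ t ∈ Icc (0:ℝ) t₀, ∀ (C : E →L[ℝ] E) (x : E),
          ι ((G t C) x) = ∫ r in (0:ℝ)..t, T₁ (t - r) ((K (F r C)) x)) ∧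
        ∀ c : ℝ, (∀ s ∈ Icc (0:ℝ) t₀, ‖F s‖ ≤ c) → ∀ t ∈ Icc (0:ℝ) t₀, ‖G t‖ ≤ q * c

/-- A `τ_sot`-bi-continuous semigroup on `𝓛(E)`. -/
structure IsBiContSotSemigroup (U : ℝ → (E →L[ℝ] E) →L[ℝ] (E →L[ℝ] E)) : Prop where
  map_zero : U 0 = 1
  map_add : ∀ s t : ℝ, 0 ≤ s → 0 ≤ t → U (s + t) = (U s).comp (U t)
  strongCont : ∀ (C : E →L[ℝ] E) (x : E), ContinuousOn (fun t => (U t C) x) (Ici (0:ℝ))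
  expBound : ∃ M : ℝ, 1 ≤ M ∧ ∃ ω : ℝ, ∀ t : ℝ, 0 ≤ t → ‖U t‖ ≤ M * Real.exp (ω * t)
  biequi : ∀ t₀ : ℝ, 0 < t₀ → ∀ u : ℕ → E →L[ℝ] E, (∃ c : ℝ, ∀ n, ‖u n‖ ≤ c) →
    (∀ x : E, Tendsto (fun n => u n x) atTop (nhds (0:E))) →
    ∀ x : E, ∀ ε > (0:ℝ), ∃ N : ℕ, ∀ n ≥ N, ∀ t ∈ Icc (0:ℝ) t₀, ‖(U t (u n)) x‖ < ε

/-- The generator relation of a `τ_sot`-bi-continuous semigroup on `𝓛(E)`. -/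
def SotGenRel (U : ℝ → (E →L[ℝ] E) →L[ℝ] (E →L[ℝ] E)) (C Y : E →L[ℝ] E) : Prop :=
  (∀ x : E, Tendsto (fun t : ℝ => t⁻¹ • ((U t C) x - C x))
      (nhdsWithin 0 (Ioi 0)) (nhds (Y x))) ∧
    ∃ M : ℝ, ∀ t ∈ Ioc (0:ℝ) 1, ‖U t C - C‖ ≤ M * t

/-- `V` is a `τ_sot`-bi-continuous semigroup on `𝓛(E)` generated by `(𝒢₋₁ + 𝒦)|_{𝓛(E)}`,
where `𝒢₋₁ C = A₋₁ ∘ ι ∘ C` and the domain is `{C : 𝒢₋₁C + 𝒦C ∈ 𝓛(E)}`. -/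
def GeneratedByPerturbedImpl (V : ℝ → (E →L[ℝ] E) →L[ℝ] (E →L[ℝ] E))
    (ι : E →L[ℝ] E₁) (Am : E ≃L[ℝ] E₁)
    (K : (E →L[ℝ] E) →L[ℝ] (E →L[ℝ] E₁)) : Prop :=
  IsBiContSotSemigroup V ∧ ∀ C Y : E →L[ℝ] E,
    SotGenRel V C Y ↔ ι.comp Y = ((Am : E →L[ℝ] E₁)).comp C + K C

/-! For `s > 0` let `P s := ∫₀ˢ S(r) dr` (strongly). For every `C`, the operator `P s ∘ C` lies
in the domain of the generator of `𝒱` with image `(S(s) - 1) ∘ C`, and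
`P s ∘ (C ∘ D) = (P s ∘ C) ∘ D`. As that generator is `C ↦ A₋₁ ∘ ι ∘ C + 𝒦 C` and the first
summand commutes with right multiplication, comparing the two generator equations gives `𝒦 (P s ∘ C ∘ D) = 𝒦 (P s ∘ C) ∘ D`. Finally
`s⁻¹ P s → 1` strongly as `s → 0⁺`, and `𝒦` is strongly continuous. -/

theorem tendsto_inv_smul_integral_add [CompleteSpace E] {f : ℝ → E} {a : ℝ}
    (hf : ContinuousOn f (Ici a)) :
    Tendsto (fun t : ℝ => t⁻¹ • ∫ r in a..a + t, f r) (𝓝[>] 0) (𝓝 (f a)) := by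
  have hderiv : HasDerivWithinAt (fun u => ∫ r in a..u, f r) (f a) (Ici a) a :=
    intervalIntegral.integral_hasDerivWithinAt_right (t := Ioi a) IntervalIntegrable.refl
      (hf.mono Ioi_subset_Ici_self |>.stronglyMeasurableAtFilter_nhdsWithin measurableSet_Ioi a)
      ((hf a self_mem_Ici).mono Ioi_subset_Ici_self)
  rw [← hasDerivWithinAt_Ioi_iff_Ici,
    hasDerivWithinAt_iff_tendsto_slope' self_notMem_Ioi] at hderiv
  have hshift : Tendsto (fun t : ℝ => a + t) (𝓝[>] 0) (𝓝[>] a) := by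
    refine tendsto_nhdsWithin_of_tendsto_nhds_of_eventually_within _ ?_ ?_
    · simpa using ((continuous_const_add a).tendsto 0).mono_left nhdsWithin_le_nhds
    · filter_upwards [self_mem_nhdsWithin] with t (ht : 0 < t)
      exact lt_add_of_pos_right a ht
  refine (hderiv.comp hshift).congr fun t => ?_
  simp [slope_def_module]

theorem norm_integral_apply_le {S : ℝ → E →L[ℝ] E} {B c : ℝ} (hB : ∀ r ∈ Icc 0 c, ‖S r‖ ≤ B)
    (x : E) {a t : ℝ} (ha : 0 ≤ a) (ht : 0 ≤ t) (hat : a + t ≤ c) :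
    ‖∫ r in a..a + t, S r x‖ ≤ B * ‖x‖ * t := by
  have hpt : ∀ r ∈ uIoc a (a + t), ‖S r x‖ ≤ B * ‖x‖ := fun r hr => by
    rw [uIoc_of_le (by linarith)] at hr
    exact (S r).le_of_opNorm_le (hB r ⟨by linarith [hr.1], by linarith [hr.2]⟩) x
  simpa [abs_of_nonneg ht] using intervalIntegral.norm_integral_le_of_norm_le_const hpt

namespace IsC0Semigroup

variable {S : ℝ → E →L[ℝ] E}

theorem intervalIntegrable (hS : IsC0Semigroup S) (x : E) {a b : ℝ} (ha : 0 ≤ a) (hb : 0 ≤ b) :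
    IntervalIntegrable (fun r => S r x) volume a b :=
  ((hS.strongCont x).mono fun _ hr => le_trans (le_min ha hb) hr.1).intervalIntegrable

variable [CompleteSpace E]

theorem exists_bound_Icc (hS : IsC0Semigroup S) (s : ℝ) : ∃ B, ∀ r ∈ Icc 0 s, ‖S r‖ ≤ B := by
  have horbit (x : E) : ∃ c, ∀ r : Icc 0 s, ‖S r x‖ ≤ c := by
    obtain ⟨c, hc⟩ := isCompact_Icc.exists_bound_of_continuousOn
      ((hS.strongCont x).mono Icc_subset_Ici_self)
    exact ⟨c, fun r => hc r r.2⟩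
  obtain ⟨B, hB⟩ := banach_steinhaus horbit
  exact ⟨B, fun r hr => hB ⟨r, hr⟩⟩

theorem exists_integral (hS : IsC0Semigroup S) {s : ℝ} (hs : 0 ≤ s) :
    ∃ P : E →L[ℝ] E, ∀ x, P x = ∫ r in (0:ℝ)..s, S r x := by
  obtain ⟨B, hB⟩ := hS.exists_bound_Icc s
  let L : E →ₗ[ℝ] E :=
    { toFun := fun x => ∫ r in (0:ℝ)..s, S r x
      map_add' := fun x y => by
        simp only [_root_.map_add]
        exact intervalIntegral.integral_add (hS.intervalIntegrable x le_rfl hs)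
          (hS.intervalIntegrable y le_rfl hs)
      map_smul' := fun a x => by
        simp only [_root_.map_smul, RingHom.id_apply]
        exact intervalIntegral.integral_smul a _ }
  refine ⟨L.mkContinuous (B * s) fun x => ?_, fun x => rfl⟩
  simpa [L, mul_right_comm] using norm_integral_apply_le hB x le_rfl hs (by simp)

theorem apply_integral_sub_integral (hS : IsC0Semigroup S) {s t : ℝ} (hs : 0 ≤ s)
    (ht : 0 ≤ t) (x : E) :
    S t (∫ r in (0:ℝ)..s, S r x) - ∫ r in (0:ℝ)..s, S r x =
      (∫ r in s..s + t, S r x) - ∫ r in (0:ℝ)..t, S r x := by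
  have hshift : S t (∫ r in (0:ℝ)..s, S r x) = ∫ r in t..t + s, S r x := by
    rw [← (S t).intervalIntegral_comp_comm (hS.intervalIntegrable x le_rfl hs)]
    calc ∫ r in (0:ℝ)..s, S t (S r x) = ∫ r in (0:ℝ)..s, S (t + r) x :=
          intervalIntegral.integral_congr fun r hr => by
            rw [hS.map_add t r ht (le_trans (le_min le_rfl hs) hr.1)]; rfl
      _ = ∫ r in t..t + s, S r x := by
          simpa using
            intervalIntegral.integral_comp_add_left (a := 0) (b := s) (fun r => S r x) t
  rw [hshift, add_comm t s, intervalIntegral.integral_interval_sub_interval_comm'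
    (hS.intervalIntegrable x ht (by positivity)) (hS.intervalIntegrable x le_rfl hs)
    (hS.intervalIntegrable x ht le_rfl)]

theorem tendsto_inv_smul_integral (hS : IsC0Semigroup S) (x : E) :
    Tendsto (fun s : ℝ => s⁻¹ • ∫ r in (0:ℝ)..s, S r x) (𝓝[>] 0) (𝓝 x) := by
  simpa [hS.map_zero] using tendsto_inv_smul_integral_add (hS.strongCont x)

theorem c0GenRel_integral (hS : IsC0Semigroup S) {s : ℝ} (hs : 0 ≤ s) (x : E) :
    C0GenRel S (∫ r in (0:ℝ)..s, S r x) (S s x - x) := by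
  have hs' : ContinuousOn (fun r => S r x) (Ici s) :=
    (hS.strongCont x).mono (Ici_subset_Ici.mpr hs)
  refine ((tendsto_inv_smul_integral_add hs').sub (hS.tendsto_inv_smul_integral x)).congr' ?_
  filter_upwards [self_mem_nhdsWithin] with t (ht : 0 < t)
  rw [hS.apply_integral_sub_integral hs ht.le, smul_sub]

theorem exists_norm_comp_integral_sub_le (hS : IsC0Semigroup S) {s : ℝ}
    (hs : 0 ≤ s) {P : E →L[ℝ] E} (hP : ∀ x, P x = ∫ r in (0:ℝ)..s, S r x) :
    ∃ M, ∀ t ∈ Ioc (0:ℝ) 1, ‖(S t).comp P - P‖ ≤ M * t := by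
  obtain ⟨B, hB⟩ := hS.exists_bound_Icc (s + 1)
  refine ⟨2 * B, fun t ht => (ContinuousLinearMap.opNorm_le_bound _ ?_ fun x => ?_)⟩
  · exact mul_nonneg (by linarith [(norm_nonneg _).trans (hB 0 ⟨le_rfl, by linarith⟩)]) ht.1.le
  rw [sub_apply, ContinuousLinearMap.comp_apply, hP,
    hS.apply_integral_sub_integral hs ht.1.le]
  calc ‖(∫ r in s..s + t, S r x) - ∫ r in (0:ℝ)..t, S r x‖
      ≤ ‖∫ r in s..s + t, S r x‖ + ‖∫ r in (0:ℝ)..0 + t, S r x‖ := by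
        simpa using norm_sub_le _ _
    _ ≤ B * ‖x‖ * t + B * ‖x‖ * t := by
        gcongr
        · exact norm_integral_apply_le hB x hs ht.1.le (by linarith [ht.2])
        · exact norm_integral_apply_le hB x le_rfl ht.1.le (by linarith [ht.2])
    _ = 2 * B * t * ‖x‖ := by ring

theorem sotGenRel_implemented_comp (hS : IsC0Semigroup S) {s : ℝ}
    (hs : 0 ≤ s) {P : E →L[ℝ] E} (hP : ∀ x, P x = ∫ r in (0:ℝ)..s, S r x) (C : E →L[ℝ] E) :
    SotGenRel (implemented S) (P.comp C) ((S s - 1).comp C) := by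
  obtain ⟨M, hM⟩ := hS.exists_norm_comp_integral_sub_le hs hP
  refine ⟨fun x => ?_, M * ‖C‖, fun t ht => ?_⟩
  · simpa [C0GenRel, implemented, hP] using hS.c0GenRel_integral hs (C x)
  · calc ‖implemented S t (P.comp C) - P.comp C‖ = ‖((S t).comp P - P).comp C‖ := by
          rw [ContinuousLinearMap.sub_comp]; rfl
      _ ≤ M * t * ‖C‖ := by
          grw [ContinuousLinearMap.opNorm_comp_le, hM t ht]
      _ = M * ‖C‖ * t := by ring

end IsC0Semigroup

theorem GeneratedByPerturbedImpl.map_comp_of_sotGenRel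
    {V : ℝ → (E →L[ℝ] E) →L[ℝ] (E →L[ℝ] E)} {ι : E →L[ℝ] E₁} {Am : E ≃L[ℝ] E₁}
    {K : (E →L[ℝ] E) →L[ℝ] (E →L[ℝ] E₁)} (hgen : GeneratedByPerturbedImpl V ι Am K)
    {C Y D : E →L[ℝ] E} (hC : SotGenRel V C Y) (hCD : SotGenRel V (C.comp D) (Y.comp D)) :
    K (C.comp D) = (K C).comp D := by
  have h := congrArg (·.comp D) ((hgen.2 C Y).1 hC)
  rw [ContinuousLinearMap.comp_assoc, (hgen.2 _ _).1 hCD, ContinuousLinearMap.add_comp,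
    ContinuousLinearMap.comp_assoc] at h
  exact add_left_cancel h

theorem MemSDSsot.tendsto_apply {T₁ : ℝ → E₁ →L[ℝ] E₁} {ι : E →L[ℝ] E₁}
    {K : (E →L[ℝ] E) →L[ℝ] (E →L[ℝ] E₁)} {t₀ : ℝ} (hK : MemSDSsot T₁ ι K t₀)
    {α : Type*} {l : Filter α} {F : α → E →L[ℝ] E} {C : E →L[ℝ] E}
    (hF : ∀ y, Tendsto (fun a => F a y) l (𝓝 (C y))) (x : E) :
    Tendsto (fun a => K (F a) x) l (𝓝 (K C x)) := by
  obtain ⟨v, c, -, hc⟩ := hK.1 x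
  have hsum : Tendsto (fun a => c * ∑ y ∈ v, ‖F a y - C y‖) l (𝓝 0) := by
    simpa using (tendsto_finsetSum v fun y _ => ((hF y).sub_const (C y)).norm).const_mul c
  rw [tendsto_iff_norm_sub_tendsto_zero]
  refine squeeze_zero (fun _ => norm_nonneg _) (fun a => ?_) hsum
  simpa [map_sub] using hc (F a - C)

theorem stmt_6_general [CompleteSpace E]
    (S : ℝ → E →L[ℝ] E) (T₁ : ℝ → E₁ →L[ℝ] E₁) (ι : E →L[ℝ] E₁) (Am : E ≃L[ℝ] E₁)
    (hS : IsC0Semigroup S)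
    (t₀ : ℝ) (K : (E →L[ℝ] E) →L[ℝ] (E →L[ℝ] E₁))
    (hK : MemSDSsot T₁ ι K t₀)
    (hgen : GeneratedByPerturbedImpl (implemented S) ι Am K) :
    ∀ C D : E →L[ℝ] E, K (C.comp D) = (K C).comp D := by
  intro C D
  have hmul : ∀ s ∈ Ioi (0:ℝ), ∃ P : E →L[ℝ] E, (∀ x, P x = ∫ r in (0:ℝ)..s, S r x) ∧
      K (P.comp (C.comp D)) = (K (P.comp C)).comp D := by
    intro s hs
    obtain ⟨P, hP⟩ := hS.exists_integral hs.le
    have hCD := hS.sotGenRel_implemented_comp hs.le hP (C.comp D)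
    rw [← ContinuousLinearMap.comp_assoc, ← ContinuousLinearMap.comp_assoc] at hCD
    refine ⟨P, hP, ?_⟩
    rw [← ContinuousLinearMap.comp_assoc]
    exact hgen.map_comp_of_sotGenRel (hS.sotGenRel_implemented_comp hs.le hP C) hCD
  choose! P hP hPK using hmul
  have hmean (B : E →L[ℝ] E) (y : E) :
      Tendsto (fun s : ℝ => ((s⁻¹ • P s).comp B) y) (𝓝[>] 0) (𝓝 (B y)) := by
    refine (hS.tendsto_inv_smul_integral (B y)).congr' ?_
    filter_upwards [self_mem_nhdsWithin] with s hs
    simp [hP s hs]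
  ext x
  refine tendsto_nhds_unique ((hK.tendsto_apply (hmean (C.comp D)) x).congr' ?_)
    (hK.tendsto_apply (hmean C) (D x))
  filter_upwards [self_mem_nhdsWithin] with s hs
  simp [hPK s hs]

/-- If the perturbed semigroup of an implemented semigroup by an admissible
`𝒦` is again implemented, then `𝒦(C∘D) = 𝒦(C)∘D`. -/
theorem stmt_6 [CompleteSpace E] [CompleteSpace E₁]
    (T S : ℝ → E →L[ℝ] E) (T₁ : ℝ → E₁ →L[ℝ] E₁) (ι : E →L[ℝ] E₁) (Am : E ≃L[ℝ] E₁)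
    (hExt : ExtrapolationData T T₁ ι Am) (hS : IsC0Semigroup S)
    (t₀ : ℝ) (ht₀ : 0 < t₀) (K : (E →L[ℝ] E) →L[ℝ] (E →L[ℝ] E₁))
    (hK : MemSDSsot T₁ ι K t₀)
    (hgen : GeneratedByPerturbedImpl (implemented S) ι Am K) :
    ∀ C D : E →L[ℝ] E, K (C.comp D) = (K C).comp D :=
  stmt_6_general S T₁ ι Am hS t₀ K hK hgen
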